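/- Let G = (V,E) be a finite connected undirected graph with n = |V| ≥ 3 vertices and nonnegative edge costs c : E → ℝ≥0, and let d : V × V → ℝ≥0 be the shortest-path metric of G (d(u,v) is the minimum total cost of a walk in G from u to v). Then the minimum of Σ_{e} d_e x_e over all vectors x feasible for the subtour elimination LP on the complete graph over V with edge costs d equals the infimum of Σ_{e∈E} c_e y_e over all vectors y feasible for the 2ECSS LP on G. -/

import Mathlib

open scoped Classical

noncomputable section

variable {V : Type*} [Fintype V] [DecidableEq V]

/-- Cut value of `S`: the sum of `x` over edges of `G` with exactly one endpoint in `S`. -/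
def cutSum (G : SimpleGraph V) (x : Sym2 V → ℝ) (S : Set V) : ℝ :=
  ∑ e : Sym2 V, if e ∈ G.edgeSet ∧ ∃ u v, e = s(u, v) ∧ u ∈ S ∧ v ∉ S then x e else 0

/-- `x` is feasible for the 2ECSS LP on `G`: nonnegative on edges, and every
nonempty proper cut has value at least `2`. -/
def Feas2ECSS (G : SimpleGraph V) (x : Sym2 V → ℝ) : Prop :=
  (∀ e ∈ G.edgeSet, 0 ≤ x e) ∧
    ∀ S : Set V, S.Nonempty → S ≠ Set.univ → 2 ≤ cutSum G x S

/-- Cost `∑_{e ∈ E} c_e x_e` of a vector `x` with respect to edge costs `c`. -/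
def lpCost (G : SimpleGraph V) (c x : Sym2 V → ℝ) : ℝ :=
  ∑ e : Sym2 V, if e ∈ G.edgeSet then c e * x e else 0

/-- The support of `x`: edges of `G` where `x` is nonzero. -/
def lpSupport (G : SimpleGraph V) (x : Sym2 V → ℝ) : Finset (Sym2 V) :=
  Finset.univ.filter fun e => e ∈ G.edgeSet ∧ x e ≠ 0
/-- The sum of `x` over edges of `G` incident to the vertex `v`. -/
def vertexSum (G : SimpleGraph V) (x : Sym2 V → ℝ) (v : V) : ℝ :=
  ∑ e : Sym2 V, if e ∈ G.edgeSet ∧ v ∈ e then x e else 0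

/-- `x` is feasible for the subtour elimination LP on `G`. -/
def FeasSubtour (G : SimpleGraph V) (x : Sym2 V → ℝ) : Prop :=
  (∀ e ∈ G.edgeSet, 0 ≤ x e ∧ x e ≤ 1) ∧
    (∀ v : V, vertexSum G x v = 2) ∧
    ∀ S : Set V, S.Nonempty → S ≠ Set.univ → 2 ≤ cutSum G x S

/-- The shortest-path distance between the two endpoints of the pair `e`:
the infimum of the total cost of a walk in `G` between them. -/
def spDist (G : SimpleGraph V) (c : Sym2 V → ℝ) (e : Sym2 V) : ℝ :=
  sInf {t | ∃ u v, e = s(u, v) ∧ ∃ p : G.Walk u v, t = (p.edges.map c).sum}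

end

/-!
A subtour point `x` on the metric completion is routed along shortest walks of `G`: sending `x e`
units along a shortest walk between the ends of `e` gives a 2ECSS point on `G` of the same cost,
because every walk between the two sides of a cut crosses it.

Conversely, rounding `N • y` up and doubling it turns a 2ECSS point `y` into an Eulerian multigraph
all of whose cuts are at least `4N`. Lovász's splitting-off lemma repeatedly replaces two edges
`sa`, `sb` at a vertex of degree above `4N` by the edge `ab` without creating a cut below `4N`,
and by the triangle inequality for the shortest-path metric this never raises the cost. The
resulting `4N`-regular multigraph divided by `2N` is a subtour point whose cost exceeds that of `y`
by at most `(∑ c) / N`.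
-/

open Finset

section Cut

variable {V : Type*}

def CrossesCut (X : Finset V) (e : Sym2 V) : Prop :=
  ∃ u v, e = s(u, v) ∧ u ∈ X ∧ v ∉ X

@[simp]
theorem crossesCut_mk {X : Finset V} {u v : V} :
    CrossesCut X s(u, v) ↔ u ∈ X ∧ v ∉ X ∨ v ∈ X ∧ u ∉ X := by
  constructor
  · rintro ⟨a, b, hab, ha, hb⟩
    rcases Sym2.eq_iff.1 hab with ⟨rfl, rfl⟩ | ⟨rfl, rfl⟩ <;> tauto
  · rintro (⟨hu, hv⟩ | ⟨hv, hu⟩)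
    exacts [⟨u, v, rfl, hu, hv⟩, ⟨v, u, Sym2.eq_swap, hv, hu⟩]

theorem CrossesCut.not_isDiag {X : Finset V} {e : Sym2 V} (h : CrossesCut X e) : ¬e.IsDiag := by
  obtain ⟨u, v, rfl, hu, hv⟩ := h
  rw [Sym2.mk_isDiag_iff]
  rintro rfl
  exact hv hu

variable [Fintype V]

@[simp]
theorem crossesCut_compl [DecidableEq V] {X : Finset V} {e : Sym2 V} :
    CrossesCut Xᶜ e ↔ CrossesCut X e := by
  induction e using Sym2.ind
  simp only [crossesCut_mk, mem_compl]
  tauto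

/-- A multigraph is an edge multiplicity `m : Sym2 V → ℕ`; `cut m {v}` is the degree of `v`, in
which loops `s(v, v)` do not count. -/
noncomputable def cut {M : Type*} [AddCommMonoid M] (m : Sym2 V → M) (X : Finset V) : M :=
  ∑ e, if CrossesCut X e then m e else 0

section AddCommMonoid

variable {M : Type*} [AddCommMonoid M] (m : Sym2 V → M) (X : Finset V)

theorem cut_compl [DecidableEq V] : cut m Xᶜ = cut m X := by
  simp only [cut, crossesCut_compl]

theorem cut_univ : cut m univ = 0 :=
  sum_eq_zero fun _ _ => if_neg fun ⟨_, _, _, _, hv⟩ => hv (mem_univ _)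

theorem cut_add (m' : Sym2 V → M) : cut (m + m') X = cut m X + cut m' X := by
  simp only [cut, ← sum_add_distrib, Pi.add_apply, ite_add_zero]

theorem cut_sum {ι : Type*} (s : Finset ι) (f : ι → Sym2 V → M) :
    cut (∑ i ∈ s, f i) X = ∑ i ∈ s, cut (f i) X := by
  simp only [cut, Finset.sum_apply]
  rw [sum_comm]
  exact sum_congr rfl fun e _ => by split_ifs <;> simp

theorem cut_single [DecidableEq V] (f : Sym2 V) (a : M) :
    cut (Pi.single f a) X = if CrossesCut X f then a else 0 := by
  rw [cut, sum_eq_single f (fun e _ he => by simp [he]) (by simp)]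
  simp

theorem cut_smul {R : Type*} [Monoid R] [DistribMulAction R M] (r : R) :
    cut (r • m) X = r • cut m X := by
  simp only [cut, smul_sum, Pi.smul_apply, smul_ite, smul_zero]

theorem map_cut {N F : Type*} [AddCommMonoid N] [FunLike F M N] [AddMonoidHomClass F M N]
    (φ : F) : φ (cut m X) = cut (fun e => φ (m e)) X := by
  simp only [cut, map_sum, apply_ite φ, map_zero]

end AddCommMonoid

theorem cut_mono {M : Type*} [AddCommMonoid M] [PartialOrder M] [IsOrderedAddMonoid M]
    {m m' : Sym2 V → M} (h : m ≤ m') (X : Finset V) : cut m X ≤ cut m' X :=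
  sum_le_sum fun e _ => by split_ifs <;> simp [h e]

theorem cut_nonneg {M : Type*} [AddCommMonoid M] [PartialOrder M] [IsOrderedAddMonoid M]
    {m : Sym2 V → M} (h : ∀ e, 0 ≤ m e) (X : Finset V) : 0 ≤ cut m X :=
  sum_nonneg fun e _ => by split_ifs; exacts [h e, le_rfl]

end Cut

section NatCut

variable {V : Type*} [Fintype V] [DecidableEq V] (m : Sym2 V → ℕ)

theorem cut_inter_add_cut_union_le (X Y : Finset V) :
    cut m (X ∩ Y) + cut m (X ∪ Y) ≤ cut m X + cut m Y := by
  simp only [cut, ← sum_add_distrib]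
  refine sum_le_sum fun e _ => ?_
  induction e using Sym2.ind with | _ u v => ?_
  by_cases hux : u ∈ X <;> by_cases huy : u ∈ Y <;> by_cases hvx : v ∈ X <;>
    by_cases hvy : v ∈ Y <;> simp [hux, huy, hvx, hvy]

theorem cut_insert {s : V} {X : Finset V} (hs : s ∉ X) :
    cut m (insert s X) + 2 * ∑ v ∈ X, m s(s, v) = cut m X + cut m {s} := by
  rw [← sum_image fun a _ b _ h => Sym2.congr_right.1 h, ← univ_inter (X.image _),
    ← sum_ite_mem, mul_sum]
  simp only [cut, ← sum_add_distrib]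
  refine sum_congr rfl fun e _ => ?_
  induction e using Sym2.ind with | _ u v => ?_
  have himg : s(u, v) ∈ X.image (s(s, ·)) ↔ u = s ∧ v ∈ X ∨ v = s ∧ u ∈ X := by
    simp only [mem_image, Sym2.eq_iff]
    aesop
  rw [if_congr himg rfl rfl]
  by_cases hvX : v ∈ X <;> by_cases huX : u ∈ X <;> by_cases hu : u = s <;>
    by_cases hv : v = s <;> simp_all <;> omega

theorem even_cut (heven : ∀ v, Even (cut m {v})) (X : Finset V) : Even (cut m X) := by
  induction X using Finset.induction_on with
  | empty => rw [← compl_univ, cut_compl, cut_univ]; exact Even.zero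
  | insert s X hs ih =>
    have h := cut_insert m hs ▸ ih.add (heven s)
    exact (Nat.even_add.1 h).2 (even_two_mul _)

theorem cut_pair {u v : V} (h : u ≠ v) :
    cut m {u, v} + 2 * m s(u, v) = cut m {u} + cut m {v} := by
  rw [add_comm (cut m {u})]
  simpa using cut_insert m (X := {v}) (by simpa using h)

theorem cut_singleton_eq_sum (s : V) : cut m {s} = ∑ v ∈ {s}ᶜ, m s(s, v) := by
  have h := cut_insert m (s := s) (X := {s}ᶜ) (by simp)
  rw [insert_compl_self, cut_univ, cut_compl] at h
  omega

end NatCut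

theorem Pi.single_add_single_le {α : Type*} [DecidableEq α] {m : α → ℕ} {f g : α}
    (hf : 1 ≤ m f) (hg : 1 ≤ m g) (hfg : f = g → 2 ≤ m f) :
    Pi.single f 1 + Pi.single g 1 ≤ m := fun e => by
  simp only [Pi.add_apply, Pi.single_apply]
  split_ifs <;> simp_all

theorem exists_single_add_single_le {V : Type*} [DecidableEq V] {m : Sym2 V → ℕ} {s : V}
    {X : Finset V} (h : 2 ≤ ∑ v ∈ X, m s(s, v)) :
    ∃ a ∈ X, ∃ b ∈ X, Pi.single s(s, a) 1 + Pi.single s(s, b) 1 ≤ m := by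
  obtain ⟨a, ha, hma⟩ := exists_ne_zero_of_sum_ne_zero (by omega : ∑ v ∈ X, m s(s, v) ≠ 0)
  by_cases h2 : 2 ≤ m s(s, a)
  · exact ⟨a, ha, a, ha, Pi.single_add_single_le (by omega) (by omega) fun _ => h2⟩
  · have hrest := add_sum_erase X (fun v => m s(s, v)) ha
    obtain ⟨b, hb, hmb⟩ :=
      exists_ne_zero_of_sum_ne_zero (by omega : ∑ v ∈ X.erase a, m s(s, v) ≠ 0)
    refine ⟨a, ha, b, mem_of_mem_erase hb, Pi.single_add_single_le (by omega) (by omega) ?_⟩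
    exact fun hab => absurd (Sym2.congr_right.1 hab).symm (ne_of_mem_erase hb)

section SplittingOff

variable {V : Type*} [Fintype V] [DecidableEq V] {m : Sym2 V → ℕ}

theorem cut_le_of_lt_add_two {lam : ℕ} (hlam : Even lam) (heven : ∀ v, Even (cut m {v}))
    {X : Finset V} (hX : cut m X < lam + 2) : cut m X ≤ lam := by
  obtain ⟨a, ha⟩ := even_cut m heven X
  obtain ⟨b, rfl⟩ := hlam
  omega

/-- Lovász's splitting-off lemma, Eulerian case. Call `X` dangerous if `s ∉ X` and
`cut m X < lam + 2`; by parity its cut is then at most `lam`. If no pair were admissible, take a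
maximal dangerous `X` containing a neighbour `t` of `s`, and a neighbour `w ∉ X` of `s`. A dangerous
`Y` containing `t` and `w` makes `X ∪ Y` dangerous by submodularity, contradicting maximality. -/
theorem exists_admissible_pair {lam : ℕ} {s : V} (hlam : Even lam)
    (heven : ∀ v, Even (cut m {v}))
    (hcut : ∀ X : Finset V, X.Nonempty → X ≠ univ → lam ≤ cut m X) (hs : lam < cut m {s}) :
    ∃ a b, a ≠ s ∧ b ≠ s ∧ Pi.single s(s, a) 1 + Pi.single s(s, b) 1 ≤ m ∧
      ∀ X : Finset V, s ∉ X → a ∈ X → b ∈ X → lam + 2 ≤ cut m X := by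
  by_contra! hbad
  have hD := cut_singleton_eq_sum m s
  have hs2 : lam + 2 ≤ cut m {s} :=
    not_lt.1 fun h => (cut_le_of_lt_add_two hlam heven h).not_gt hs
  obtain ⟨t, ht, u, hu, htu⟩ :=
    exists_single_add_single_le (m := m) (s := s) (X := {s}ᶜ) (by omega)
  have hts : t ≠ s := by simpa using ht
  have hmt : 1 ≤ m s(s, t) := le_trans (by simp) (htu s(s, t))
  obtain ⟨X₀, hsX₀, htX₀, -, hX₀⟩ := hbad t u hts (by simpa using hu) htu
  obtain ⟨X, hX₀X, ⟨hsX, hX⟩, hmax⟩ :=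
    (Set.toFinite {X : Finset V | s ∉ X ∧ cut m X < lam + 2}).exists_le_maximal
      (a := X₀) ⟨hsX₀, hX₀⟩
  have hXs : X ⊆ {s}ᶜ := subset_compl_singleton.2 hsX
  obtain ⟨w, hw, hmw⟩ : ∃ w ∈ {s}ᶜ \ X, m s(s, w) ≠ 0 := by
    refine exists_ne_zero_of_sum_ne_zero ?_
    have := cut_insert m hsX
    have := sum_sdiff (f := fun v => m s(s, v)) hXs
    omega
  obtain ⟨hws, hwX⟩ := mem_sdiff.1 hw
  obtain ⟨Y, hsY, htY, hwY, hY⟩ := hbad t w hts (by simpa using hws) <|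
    Pi.single_add_single_le hmt (by omega) fun h =>
      absurd (Sym2.congr_right.1 h) (fun h => hwX (h ▸ hX₀X htX₀))
  have htXY : t ∈ X ∩ Y := mem_inter.2 ⟨hX₀X htX₀, htY⟩
  have hinter := hcut (X ∩ Y) ⟨t, htXY⟩ fun h => hsY (mem_of_mem_inter_right (h ▸ mem_univ s))
  have := cut_inter_add_cut_union_le m X Y
  have := cut_le_of_lt_add_two hlam heven hX
  have := cut_le_of_lt_add_two hlam heven hY
  have hXY : X ∪ Y ≤ X := hmax ⟨by simp [hsX, hsY], by omega⟩ subset_union_left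
  exact hwX (hXY (mem_union_right X hwY))

end SplittingOff

section Reduction

variable {V : Type*} [Fintype V] [DecidableEq V]

theorem le_cut_of_forall_notMem {M : Type*} [AddCommMonoid M] [LE M] {m : Sym2 V → M} {s : V}
    {lam : M} (h : ∀ X : Finset V, s ∉ X → X.Nonempty → lam ≤ cut m X) {X : Finset V}
    (hX : X.Nonempty) (hXu : X ≠ univ) : lam ≤ cut m X := by
  by_cases hsX : s ∈ X
  · rw [← cut_compl]
    exact h _ (by simpa using hsX) (by simpa [nonempty_iff_ne_empty] using hXu)
  · exact h X hsX hX

section Split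

variable {m m' : Sym2 V → ℕ} {s a b : V}

theorem cut_splitOff
    (hsplit : m' + (Pi.single s(s, a) 1 + Pi.single s(s, b) 1) = m + Pi.single s(a, b) 1)
    {X : Finset V} (hsX : s ∉ X) :
    cut m' X + 2 * (if a ∈ X ∧ b ∈ X then 1 else 0) = cut m X := by
  have h := congrArg (cut · X) hsplit
  simp only [cut_add, cut_single, crossesCut_mk] at h
  by_cases haX : a ∈ X <;> by_cases hbX : b ∈ X <;> simp [haX, hbX, hsX] at h ⊢ <;> omega

theorem cut_singleton_splitOff
    (hsplit : m' + (Pi.single s(s, a) 1 + Pi.single s(s, b) 1) = m + Pi.single s(a, b) 1)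
    (ha : a ≠ s) (hb : b ≠ s) : cut m' {s} + 2 = cut m {s} := by
  have h := congrArg (cut · {s}) hsplit
  simp only [cut_add, cut_single, crossesCut_mk] at h
  simp [ha, hb] at h
  omega

theorem sum_mul_splitOff (D : Sym2 V → ℝ)
    (hsplit : m' + (Pi.single s(s, a) 1 + Pi.single s(s, b) 1) = m + Pi.single s(a, b) 1) :
    ∑ e, D e * m' e + D s(s, a) + D s(s, b) = ∑ e, D e * m e + D s(a, b) := by
  have h := congrArg (fun f : Sym2 V → ℕ => ∑ e, D e * (f e : ℝ)) hsplit
  simp only [Pi.add_apply, Nat.cast_add, mul_add, sum_add_distrib, Pi.single_apply] at h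
  simpa [add_assoc] using h

end Split

theorem exists_splitOff {lam : ℕ} (hlam : Even lam) (D : Sym2 V → ℝ)
    (hD : ∀ s a b, D s(a, b) ≤ D s(s, a) + D s(s, b)) {m : Sym2 V → ℕ}
    (heven : ∀ v, Even (cut m {v})) (hcut : ∀ X : Finset V, X.Nonempty → X ≠ univ → lam ≤ cut m X)
    {s : V} (hs : lam < cut m {s}) :
    ∃ m' : Sym2 V → ℕ, (∀ v, Even (cut m' {v})) ∧
      (∀ X : Finset V, X.Nonempty → X ≠ univ → lam ≤ cut m' X) ∧
      ∑ v, cut m' {v} < ∑ v, cut m {v} ∧ ∑ e, D e * m' e ≤ ∑ e, D e * m e := by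
  obtain ⟨a, b, ha, hb, hle, hadm⟩ := exists_admissible_pair hlam heven hcut hs
  set m' := m - (Pi.single s(s, a) 1 + Pi.single s(s, b) 1) + Pi.single s(a, b) 1
  have hsplit : m' + (Pi.single s(s, a) 1 + Pi.single s(s, b) 1) = m + Pi.single s(a, b) 1 := by
    rw [add_right_comm, tsub_add_cancel_of_le hle]
  have hs' := cut_singleton_splitOff hsplit ha hb
  have hdeg (v : V) : ∃ j, cut m' {v} + 2 * j = cut m {v} := by
    rcases eq_or_ne v s with rfl | hv
    exacts [⟨1, hs'⟩, ⟨_, cut_splitOff hsplit (by simpa using hv.symm)⟩]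
  refine ⟨m', fun v => ?_, fun X hX hXu => ?_, sum_lt_sum (fun v _ => ?_) ⟨s, mem_univ s, ?_⟩, ?_⟩
  · obtain ⟨j, hj⟩ := hdeg v
    exact (Nat.even_add.1 (hj ▸ heven v)).2 (even_two_mul j)
  · refine le_cut_of_forall_notMem (s := s) (fun Y hsY hY => ?_) hX hXu
    have h := cut_splitOff hsplit hsY
    split_ifs at h with hab
    · linarith [hadm Y hsY hab.1 hab.2]
    · linarith [hcut Y hY fun hYu => hsY (hYu ▸ mem_univ s)]
  · obtain ⟨j, hj⟩ := hdeg v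
    omega
  · omega
  · linarith [sum_mul_splitOff D hsplit, hD s a b]

theorem exists_regular_of_eulerian [Nontrivial V] {lam : ℕ} (hlam : Even lam) (D : Sym2 V → ℝ)
    (hD : ∀ s a b, D s(a, b) ≤ D s(s, a) + D s(s, b)) (m : Sym2 V → ℕ)
    (heven : ∀ v, Even (cut m {v})) (hcut : ∀ X : Finset V, X.Nonempty → X ≠ univ → lam ≤ cut m X) :
    ∃ m' : Sym2 V → ℕ, (∀ v, cut m' {v} = lam) ∧
      (∀ X : Finset V, X.Nonempty → X ≠ univ → lam ≤ cut m' X) ∧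
      ∑ e, D e * m' e ≤ ∑ e, D e * m e := by
  induction hn : ∑ v, cut m {v} using Nat.strong_induction_on generalizing m with
  | _ n ih =>
  by_cases hreg : ∀ v, cut m {v} = lam
  · exact ⟨m, hreg, hcut, le_rfl⟩
  obtain ⟨s, hs⟩ := not_forall.1 hreg
  obtain ⟨m', heven', hcut', hdeg, hcost⟩ := exists_splitOff hlam D hD heven hcut
    ((hcut {s} (singleton_nonempty s) (singleton_ne_univ s)).lt_of_ne' hs)
  obtain ⟨m'', hreg'', hcut'', hcost''⟩ := ih _ (hn ▸ hdeg) m' heven' hcut' rfl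
  exact ⟨m'', hreg'', hcut'', hcost''.trans hcost⟩

end Reduction

section LinearPrograms

variable {V : Type*} [Fintype V]

theorem lpCost_eq_sum_mul_indicator (G : SimpleGraph V) (c x : Sym2 V → ℝ) :
    lpCost G c x = ∑ e, c e * G.edgeSet.indicator x e := by
  simp only [lpCost, Set.indicator_apply, mul_ite, mul_zero]

theorem lpCost_nonneg {G : SimpleGraph V} {c x : Sym2 V → ℝ} (hc : ∀ e ∈ G.edgeSet, 0 ≤ c e)
    (hx : ∀ e ∈ G.edgeSet, 0 ≤ x e) : 0 ≤ lpCost G c x :=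
  sum_nonneg fun e _ => by split_ifs with he; exacts [mul_nonneg (hc e he) (hx e he), le_rfl]

theorem lpCost_top_le {c x : Sym2 V → ℝ} (hc : ∀ e, 0 ≤ c e) (hx : ∀ e, 0 ≤ x e) :
    lpCost ⊤ c x ≤ ∑ e, c e * x e :=
  sum_le_sum fun e _ => by split_ifs; exacts [le_rfl, mul_nonneg (hc e) (hx e)]

theorem cut_indicator_top (x : Sym2 V → ℝ) (X : Finset V) :
    cut ((⊤ : SimpleGraph V).edgeSet.indicator x) X = cut x X := by
  refine sum_congr rfl fun e _ => ?_
  split_ifs with h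
  · induction e using Sym2.ind
    exact Set.indicator_of_mem (by simpa using h.not_isDiag) x
  · rfl

theorem cut_natCast_div (m : Sym2 V → ℕ) (L : ℝ) (X : Finset V) :
    cut (fun e => (m e : ℝ) / L) X = cut m X / L := by
  simp only [cut, Nat.cast_sum, sum_div, Nat.cast_ite, ite_div, Nat.cast_zero, zero_div]

variable [DecidableEq V]

theorem cutSum_eq_cut_indicator (G : SimpleGraph V) (x : Sym2 V → ℝ) (S : Set V) :
    cutSum G x S = cut (G.edgeSet.indicator x) S.toFinset := by
  refine sum_congr rfl fun e _ => ?_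
  by_cases he : e ∈ G.edgeSet <;> simp [he, CrossesCut]

theorem vertexSum_top (x : Sym2 V → ℝ) (v : V) : vertexSum ⊤ x v = cut x {v} := by
  refine sum_congr rfl fun e _ => ?_
  induction e using Sym2.ind with | _ a b => ?_
  congr 1
  simp only [SimpleGraph.mem_edgeSet, SimpleGraph.top_adj, Sym2.mem_iff, crossesCut_mk,
    mem_singleton, eq_iff_iff]
  aesop

theorem FeasSubtour.feas2ECSS {G : SimpleGraph V} {x : Sym2 V → ℝ} (h : FeasSubtour G x) :
    Feas2ECSS G x :=
  ⟨fun e he => (h.1 e he).1, h.2.2⟩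

theorem pair_ne_univ_of_three_le_card (hn : 3 ≤ Fintype.card V) (u v : V) :
    ({u, v} : Finset V) ≠ univ := fun h => by
  have := card_le_two (a := u) (b := v)
  rw [h, card_univ] at this
  omega

theorem feasSubtour_of_regular (hn : 3 ≤ Fintype.card V) {L : ℕ} (hL : 0 < L)
    {m : Sym2 V → ℕ} (hreg : ∀ v, cut m {v} = 2 * L)
    (hcut : ∀ X : Finset V, X.Nonempty → X ≠ univ → 2 * L ≤ cut m X) :
    FeasSubtour ⊤ (fun e => (m e : ℝ) / L) := by
  have hL' : (0 : ℝ) < L := by exact_mod_cast hL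
  refine ⟨fun e he => ⟨by positivity, ?_⟩, fun v => ?_, fun S hS hSu => ?_⟩
  · induction e using Sym2.ind with | _ u v => ?_
    have huv : u ≠ v := by simpa using he
    have h := cut_pair m huv
    have := hcut {u, v} (insert_nonempty u {v}) (pair_ne_univ_of_three_le_card hn u v)
    rw [hreg, hreg] at h
    rw [div_le_one hL']
    exact_mod_cast (by omega : m s(u, v) ≤ L)
  · rw [vertexSum_top, cut_natCast_div, hreg, Nat.cast_mul, Nat.cast_ofNat,
      mul_div_cancel_right₀ _ hL'.ne']
  · rw [cutSum_eq_cut_indicator, cut_indicator_top, cut_natCast_div, le_div_iff₀ hL']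
    exact_mod_cast hcut S.toFinset (Set.toFinset_nonempty.2 hS)
      (by simpa [← Set.toFinset_univ] using hSu)

/-- The parsimonious property of the subtour LP (Goemans–Bertsimas) for metric costs `d`. -/
theorem exists_feasSubtour_of_eulerian (hn : 3 ≤ Fintype.card V) {d : Sym2 V → ℝ}
    (hd₀ : ∀ e, 0 ≤ d e) (hd : ∀ s a b, d s(a, b) ≤ d s(s, a) + d s(s, b)) {L : ℕ} (hL : 0 < L)
    (m : Sym2 V → ℕ) (heven : ∀ v, Even (cut m {v}))
    (hcut : ∀ X : Finset V, X.Nonempty → X ≠ univ → 2 * L ≤ cut m X) :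
    ∃ x, FeasSubtour ⊤ x ∧ lpCost ⊤ d x ≤ (∑ e, d e * m e) / L := by
  have : Nontrivial V := Fintype.one_lt_card_iff_nontrivial.1 (by omega)
  obtain ⟨m', hreg, hcut', hcost⟩ :=
    exists_regular_of_eulerian (even_two_mul L) d hd m heven hcut
  refine ⟨_, feasSubtour_of_regular hn hL hreg hcut', ?_⟩
  calc lpCost ⊤ d (fun e => (m' e : ℝ) / L) ≤ ∑ e, d e * ((m' e : ℝ) / L) :=
        lpCost_top_le hd₀ fun e => by positivity
    _ = (∑ e, d e * m' e) / L := by simp only [mul_div_assoc, sum_div]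
    _ ≤ (∑ e, d e * m e) / L := by gcongr

end LinearPrograms

section Walks

variable {V : Type*} {G : SimpleGraph V} {c : Sym2 V → ℝ}

theorem SimpleGraph.Walk.exists_mem_edges_crossesCut {u v : V} (p : G.Walk u v) {X : Finset V}
    (h : CrossesCut X s(u, v)) : ∃ f ∈ p.edges, CrossesCut X f := by
  have key {a b : V} (q : G.Walk a b) (ha : a ∈ X) (hb : b ∉ X) :
      ∃ f ∈ q.edges, CrossesCut X f := by
    obtain ⟨d, hd, hda, hdb⟩ := q.exists_boundary_dart X ha hb
    exact ⟨d.edge, List.mem_map_of_mem hd, d.fst, d.snd, rfl, hda, hdb⟩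
  rcases crossesCut_mk.1 h with ⟨hu, hv⟩ | ⟨hv, hu⟩
  · exact key p hu hv
  · simpa using key p.reverse hv hu

theorem sum_map_edges_nonneg (hc : ∀ e ∈ G.edgeSet, 0 ≤ c e) {u v : V} (p : G.Walk u v) :
    0 ≤ (p.edges.map c).sum :=
  List.sum_nonneg <| by simpa using fun e he => hc e (p.edges_subset_edgeSet he)

theorem spDist_le (hc : ∀ e ∈ G.edgeSet, 0 ≤ c e) {u v : V} (p : G.Walk u v) :
    spDist G c s(u, v) ≤ (p.edges.map c).sum :=
  csInf_le ⟨0, by rintro _ ⟨_, _, _, q, rfl⟩; exact sum_map_edges_nonneg hc q⟩ ⟨u, v, rfl, p, rfl⟩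

theorem spDist_nonneg (hc : ∀ e ∈ G.edgeSet, 0 ≤ c e) (e : Sym2 V) : 0 ≤ spDist G c e :=
  Real.sInf_nonneg <| by rintro _ ⟨_, _, _, q, rfl⟩; exact sum_map_edges_nonneg hc q

theorem spDist_le_of_mem_edgeSet (hc : ∀ e ∈ G.edgeSet, 0 ≤ c e) {e : Sym2 V}
    (he : e ∈ G.edgeSet) : spDist G c e ≤ c e := by
  induction e using Sym2.ind with | _ u v => ?_
  have h : G.Adj u v := he
  simpa [h.edges_toWalk] using spDist_le hc h.toWalk

variable [Fintype V] [DecidableEq V]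

theorem exists_walk_sum_eq_spDist (hG : G.Connected) (hc : ∀ e ∈ G.edgeSet, 0 ≤ c e) (u v : V) :
    ∃ p : G.Walk u v, (p.edges.map c).sum = spDist G c s(u, v) := by
  classical
  obtain ⟨q, -, hq⟩ := (univ : Finset (G.Path u v)).exists_min_image
    (fun q => ((q : G.Walk u v).edges.map c).sum)
    ⟨⟨_, (hG u v).some.bypass_isPath⟩, mem_univ _⟩
  -- paths are finitely many, and bypassing the cycles of a walk does not increase its cost
  have hmin (p : G.Walk u v) : ((q : G.Walk u v).edges.map c).sum ≤ (p.edges.map c).sum :=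
    (hq ⟨_, p.bypass_isPath⟩ (mem_univ _)).trans <|
      (p.edges_bypass_sublist_edges.map c).sum_le_sum fun _ h => by
        obtain ⟨e, he, rfl⟩ := List.mem_map.1 h
        exact hc e (p.edges_subset_edgeSet he)
  refine ⟨q, le_antisymm (le_csInf ⟨_, u, v, rfl, q, rfl⟩ ?_) (spDist_le hc _)⟩
  rintro _ ⟨a, b, hab, p, rfl⟩
  rcases Sym2.eq_iff.1 hab with ⟨rfl, rfl⟩ | ⟨rfl, rfl⟩
  · exact hmin p
  · simpa using hmin p.reverse

theorem spDist_triangle (hG : G.Connected) (hc : ∀ e ∈ G.edgeSet, 0 ≤ c e) (u v w : V) :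
    spDist G c s(u, w) ≤ spDist G c s(u, v) + spDist G c s(v, w) := by
  obtain ⟨p, hp⟩ := exists_walk_sum_eq_spDist hG hc u v
  obtain ⟨q, hq⟩ := exists_walk_sum_eq_spDist hG hc v w
  simpa [← hp, ← hq] using spDist_le hc (p.append q)

end Walks

section Routing

variable {V : Type*} [Fintype V] [DecidableEq V] {G : SimpleGraph V}

theorem one_le_cut_count_edges {u v : V} (p : G.Walk u v) {X : Finset V}
    (h : CrossesCut X s(u, v)) : 1 ≤ cut (fun f => (p.edges.count f : ℝ)) X := by
  obtain ⟨f, hf, hfX⟩ := p.exists_mem_edges_crossesCut h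
  calc (1 : ℝ) ≤ p.edges.count f := by exact_mod_cast List.count_pos_iff.2 hf
    _ = if CrossesCut X f then (p.edges.count f : ℝ) else 0 := (if_pos hfX).symm
    _ ≤ cut (fun f => (p.edges.count f : ℝ)) X :=
      single_le_sum (f := fun e => if CrossesCut X e then (p.edges.count e : ℝ) else 0)
        (fun _ _ => by positivity) (mem_univ f)

theorem sum_mul_count_edges (c : Sym2 V → ℝ) {u v : V} (p : G.Walk u v) :
    ∑ f, c f * p.edges.count f = (p.edges.map c).sum := by
  rw [sum_list_map_count, sum_subset (f := fun f => p.edges.count f • c f) (subset_univ _)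
    fun f _ hf => by simp [List.count_eq_zero_of_not_mem (List.mem_toFinset.not.1 hf)]]
  simp only [nsmul_eq_mul, mul_comm]

section Route

variable {u v : Sym2 V → V} (p : ∀ e, G.Walk (u e) (v e)) (a : Sym2 V → ℝ)

noncomputable def route : Sym2 V → ℝ :=
  ∑ e, a e • fun f => ((p e).edges.count f : ℝ)

theorem route_apply (f : Sym2 V) : route p a f = ∑ e, a e * (p e).edges.count f := by
  simp [route]

theorem indicator_route : G.edgeSet.indicator (route p a) = route p a :=
  Set.indicator_eq_self.2 fun f hf => by
    obtain ⟨e, -, he⟩ := exists_ne_zero_of_sum_ne_zero ((route_apply p a f).symm.trans_ne hf)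
    have hfe : f ∈ (p e).edges := by
      by_contra h
      simp [List.count_eq_zero_of_not_mem h] at he
    exact (p e).edges_subset_edgeSet hfe

theorem route_nonneg (ha : ∀ e, 0 ≤ a e) (f : Sym2 V) : 0 ≤ route p a f := by
  rw [route_apply]
  exact sum_nonneg fun e _ => mul_nonneg (ha e) (by positivity)

theorem cut_le_cut_route (huv : ∀ e, e = s(u e, v e)) (ha : ∀ e, 0 ≤ a e) (X : Finset V) :
    cut a X ≤ cut (route p a) X := by
  rw [route, cut_sum]
  refine sum_le_sum fun e _ => ?_
  rw [cut_smul, smul_eq_mul]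
  split_ifs with h
  · rw [huv e] at h
    exact le_mul_of_one_le_right (ha e) (one_le_cut_count_edges _ h)
  · exact mul_nonneg (ha e) (cut_nonneg (fun f => by positivity) _)

theorem lpCost_route (c : Sym2 V → ℝ) :
    lpCost G c (route p a) = ∑ e, a e * ((p e).edges.map c).sum := by
  rw [lpCost_eq_sum_mul_indicator, indicator_route]
  simp only [route_apply, mul_sum]
  rw [sum_comm]
  refine sum_congr rfl fun e _ => ?_
  rw [← sum_mul_count_edges, mul_sum]
  exact sum_congr rfl fun f _ => by ring

end Route

theorem exists_feas2ECSS_lpCost_eq (hG : G.Connected) {c : Sym2 V → ℝ}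
    (hc : ∀ e ∈ G.edgeSet, 0 ≤ c e) {x : Sym2 V → ℝ} (hx : Feas2ECSS ⊤ x) :
    ∃ y, Feas2ECSS G y ∧ lpCost G c y = lpCost ⊤ (spDist G c) x := by
  have hwalk (e : Sym2 V) :
      ∃ u v, e = s(u, v) ∧ ∃ p : G.Walk u v, (p.edges.map c).sum = spDist G c e := by
    induction e using Sym2.ind with
    | _ a b => exact ⟨a, b, rfl, exists_walk_sum_eq_spDist hG hc a b⟩
  choose u v huv p hp using hwalk
  set a := (⊤ : SimpleGraph V).edgeSet.indicator x
  have ha (e : Sym2 V) : 0 ≤ a e := Set.indicator_nonneg (fun e he => hx.1 e he) e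
  refine ⟨route p a, ⟨fun f _ => route_nonneg p a ha f, fun S hS hSu => ?_⟩, ?_⟩
  · calc 2 ≤ cutSum ⊤ x S := hx.2 S hS hSu
      _ = cut a S.toFinset := cutSum_eq_cut_indicator _ _ _
      _ ≤ cut (route p a) S.toFinset := cut_le_cut_route p a huv ha _
      _ = cutSum G (route p a) S := by rw [cutSum_eq_cut_indicator, indicator_route]
  · rw [lpCost_route, lpCost_eq_sum_mul_indicator]
    exact sum_congr rfl fun e _ => by rw [hp, mul_comm]

end Routing

section Rounding

variable {V : Type*} [Fintype V] {G : SimpleGraph V} {c : Sym2 V → ℝ}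

noncomputable def roundUp (G : SimpleGraph V) (N : ℕ) (y : Sym2 V → ℝ) : Sym2 V → ℕ :=
  G.edgeSet.indicator fun e => ⌈N * y e⌉₊

theorem sum_spDist_mul_roundUp_le (hc : ∀ e ∈ G.edgeSet, 0 ≤ c e) {y : Sym2 V → ℝ}
    (hy : ∀ e ∈ G.edgeSet, 0 ≤ y e) (N : ℕ) :
    ∑ e, spDist G c e * roundUp G N y e ≤ N * lpCost G c y + ∑ e, G.edgeSet.indicator c e := by
  rw [lpCost_eq_sum_mul_indicator, mul_sum, ← sum_add_distrib]
  refine sum_le_sum fun e _ => ?_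
  by_cases he : e ∈ G.edgeSet
  · simp only [roundUp, Set.indicator_of_mem he]
    have := spDist_le_of_mem_edgeSet hc he
    have := hc e he
    have := Nat.ceil_lt_add_one (mul_nonneg (Nat.cast_nonneg N) (hy e he))
    have : (0 : ℝ) ≤ ⌈N * y e⌉₊ := Nat.cast_nonneg _
    nlinarith
  · simp [roundUp, he]

variable [DecidableEq V]

theorem feas2ECSS_two (hG : G.Connected) : Feas2ECSS G fun _ => 2 := by
  refine ⟨fun _ _ => zero_le_two, fun S ⟨u, hu⟩ hSu => ?_⟩
  obtain ⟨v, hv⟩ := (Set.ne_univ_iff_exists_notMem S).1 hSu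
  obtain ⟨f, hf, hfS⟩ :=
    (hG u v).some.exists_mem_edges_crossesCut (X := S.toFinset) (by simp [hu, hv])
  rw [cutSum_eq_cut_indicator]
  calc (2 : ℝ) = if CrossesCut S.toFinset f then G.edgeSet.indicator (fun _ => 2) f else 0 := by
        rw [if_pos hfS, Set.indicator_of_mem ((hG u v).some.edges_subset_edgeSet hf)]
    _ ≤ _ := single_le_sum (f := fun e => if CrossesCut S.toFinset e then
        G.edgeSet.indicator (fun _ => (2 : ℝ)) e else 0) (fun e _ => by
          split_ifs
          exacts [Set.indicator_nonneg (fun _ _ => zero_le_two) e, le_rfl]) (mem_univ f)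

theorem two_mul_le_cut_roundUp {y : Sym2 V → ℝ} (hy : Feas2ECSS G y) (N : ℕ) {X : Finset V}
    (hX : X.Nonempty) (hXu : X ≠ univ) : 2 * N ≤ cut (roundUp G N y) X := by
  have hy₂ : 2 ≤ cut (G.edgeSet.indicator y) X := by
    simpa [cutSum_eq_cut_indicator] using hy.2 X (by simpa) (by simpa using hXu)
  have hround (e : Sym2 V) : (N : ℝ) * G.edgeSet.indicator y e ≤ roundUp G N y e := by
    by_cases he : e ∈ G.edgeSet <;> simp [roundUp, he, Nat.le_ceil]
  have : (N : ℝ) * 2 ≤ cut (roundUp G N y) X := calc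
    (N : ℝ) * 2 ≤ N * cut (G.edgeSet.indicator y) X := by gcongr
    _ = cut (fun e => (N : ℝ) * G.edgeSet.indicator y e) X := map_cut _ X (AddMonoidHom.mulLeft _)
    _ ≤ cut (fun e => (roundUp G N y e : ℝ)) X := cut_mono hround X
    _ = cut (roundUp G N y) X := (map_cut _ X (Nat.castAddMonoidHom ℝ)).symm
  exact_mod_cast (by push_cast; linarith : ((2 * N : ℕ) : ℝ) ≤ cut (roundUp G N y) X)

theorem exists_feasSubtour_lpCost_le (hG : G.Connected) (hn : 3 ≤ Fintype.card V)
    (hc : ∀ e ∈ G.edgeSet, 0 ≤ c e) {y : Sym2 V → ℝ} (hy : Feas2ECSS G y) {N : ℕ} (hN : 0 < N) :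
    ∃ x, FeasSubtour ⊤ x ∧
      lpCost ⊤ (spDist G c) x ≤ lpCost G c y + (∑ e, G.edgeSet.indicator c e) / N := by
  -- doubling the rounded vector makes every degree even
  obtain ⟨x, hx, hcost⟩ := exists_feasSubtour_of_eulerian hn (spDist_nonneg hc)
    (fun s a b => by simpa only [Sym2.eq_swap (a := s)] using spDist_triangle hG hc a s b)
    (L := 2 * N) (by positivity) (roundUp G N y + roundUp G N y)
    (fun v => by rw [cut_add]; exact Even.add_self _)
    (fun X hX hXu => by have := two_mul_le_cut_roundUp hy N hX hXu; rw [cut_add]; omega)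
  refine ⟨x, hx, hcost.trans ?_⟩
  calc (∑ e, spDist G c e * ((roundUp G N y + roundUp G N y) e : ℕ)) / ((2 * N : ℕ) : ℝ)
      = (∑ e, spDist G c e * roundUp G N y e) / N := by
        simp only [Pi.add_apply, Nat.cast_mul, Nat.cast_ofNat, ← two_mul,
          mul_left_comm _ (2 : ℝ), ← mul_sum]
        exact mul_div_mul_left _ _ two_ne_zero
    _ ≤ (N * lpCost G c y + ∑ e, G.edgeSet.indicator c e) / N := by
        gcongr
        exact sum_spDist_mul_roundUp_le hc hy.1 N
    _ = lpCost G c y + (∑ e, G.edgeSet.indicator c e) / N := by field_simp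

theorem exists_feasSubtour_lpCost_le_add (hG : G.Connected) (hn : 3 ≤ Fintype.card V)
    (hc : ∀ e ∈ G.edgeSet, 0 ≤ c e) {y : Sym2 V → ℝ} (hy : Feas2ECSS G y) {ε : ℝ} (hε : 0 < ε) :
    ∃ x, FeasSubtour ⊤ x ∧ lpCost ⊤ (spDist G c) x ≤ lpCost G c y + ε := by
  set C := ∑ e, G.edgeSet.indicator c e
  obtain ⟨N, hN⟩ := exists_nat_gt (C / ε)
  have hC : 0 ≤ C := sum_nonneg fun e _ => Set.indicator_nonneg hc e
  have hN₀ : 0 < N := by exact_mod_cast (div_nonneg hC hε.le).trans_lt hN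
  obtain ⟨x, hx, hcost⟩ := exists_feasSubtour_lpCost_le hG hn hc hy hN₀
  refine ⟨x, hx, hcost.trans (add_le_add le_rfl ?_)⟩
  rw [div_le_iff₀ (by positivity)]
  rw [div_lt_iff₀ hε] at hN
  linarith

end Rounding

theorem csInf_eq_csInf_of_forall_exists_le_add {A B : Set ℝ} (hA : BddBelow A) (hB : BddBelow B)
    (hBne : B.Nonempty) (hAB : ∀ b ∈ B, ∀ ε > 0, ∃ a ∈ A, a ≤ b + ε)
    (hBA : ∀ a ∈ A, ∃ b ∈ B, b ≤ a) : sInf A = sInf B := by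
  obtain ⟨b₀, hb₀⟩ := hBne
  obtain ⟨a₀, ha₀, -⟩ := hAB b₀ hb₀ 1 one_pos
  refine le_antisymm (le_csInf ⟨b₀, hb₀⟩ fun b hb => le_of_forall_pos_le_add fun ε hε => ?_)
    (le_csInf ⟨a₀, ha₀⟩ fun a ha => ?_)
  · obtain ⟨a, ha, hab⟩ := hAB b hb ε hε
    exact (csInf_le hA ha).trans hab
  · obtain ⟨b, hb, hba⟩ := hBA a ha
    exact (csInf_le hB hb).trans hba

/-- The optimum of the subtour elimination LP on the metric completion of `G`
(the complete graph with shortest-path costs) equals the optimum of the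
2ECSS LP on `G` itself. -/
theorem subtour_completion_eq_2ecss {V : Type} [Fintype V] [DecidableEq V]
    (G : SimpleGraph V) (hG : G.Connected) (hn : 3 ≤ Fintype.card V)
    (c : Sym2 V → ℝ) (hc : ∀ e ∈ G.edgeSet, 0 ≤ c e) :
    sInf {t | ∃ x : Sym2 V → ℝ, FeasSubtour (⊤ : SimpleGraph V) x ∧
        t = lpCost (⊤ : SimpleGraph V) (spDist G c) x} =
      sInf {t | ∃ y : Sym2 V → ℝ, Feas2ECSS G y ∧ t = lpCost G c y} := by
  refine csInf_eq_csInf_of_forall_exists_le_add ?_ ?_ ⟨_, _, feas2ECSS_two hG, rfl⟩ ?_ ?_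
  · refine ⟨0, ?_⟩
    rintro _ ⟨x, hx, rfl⟩
    exact lpCost_nonneg (fun e _ => spDist_nonneg hc e) fun e he => (hx.1 e he).1
  · exact ⟨0, by rintro _ ⟨y, hy, rfl⟩; exact lpCost_nonneg hc hy.1⟩
  · rintro _ ⟨y, hy, rfl⟩ ε hε
    obtain ⟨x, hx, hcost⟩ := exists_feasSubtour_lpCost_le_add hG hn hc hy hε
    exact ⟨_, ⟨x, hx, rfl⟩, hcost⟩
  · rintro _ ⟨x, hx, rfl⟩
    obtain ⟨y, hy, hcost⟩ := exists_feas2ECSS_lpCost_eq hG hc hx.feas2ECSS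
    exact ⟨_, ⟨y, hy, rfl⟩, hcost.le⟩
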